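/- arXiv:1708.02133 — 5 statements merged into one kernel-verified Lean document; each statement's English description precedes it below -/
import Mathlib

section
/- Let f : ℝ₊ → ℝ₊ be a nonincreasing positive function with ∑_{k=0}^∞ f(k) < ∞, and fix τ > 1. Then there exists a function e : ℝ₊ → ℝ₊ such that e(r) → 0 as r → ∞ and (e(r) − e(τr))/(r·f(r)) → ∞ as r → ∞. -/
/-!
Take `e r = 2 √(S ⌈r/τ⌉)`, where `S n = ∑_{k ≥ n} f k` is the tail of the series (a discrete
form of `∫_{r/τ}^∞ f / √α`). With `a = ⌈r/τ⌉` and `b = ⌈r⌉`, concavity of the square root gives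
`e r - e (τ r) = 2 (√(S a) - √(S b)) ≥ (S a - S b) / √(S a)`, and by monotonicity the
`b - a ≈ (1 - τ⁻¹) r` terms of `S a - S b` are each at least `f r`. Hence the ratio is at least
about `(1 - τ⁻¹) / √(S a)`, which tends to infinity because the tails tend to `0`.
-/

open Filter Topology

noncomputable def tailSum (g : ℕ → ℝ) (n : ℕ) : ℝ := ∑' k, g (k + n)

lemma tailSum_pos {g : ℕ → ℝ} (hg : Summable g) {n : ℕ} (hpos : ∀ k, n ≤ k → 0 < g k) :
    0 < tailSum g n :=
  ((summable_nat_add_iff n).2 hg).tsum_pos (fun k => (hpos _ (Nat.le_add_left n k)).le) 0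
    (hpos _ (Nat.le_add_left n 0))

lemma tendsto_tailSum (g : ℕ → ℝ) : Tendsto (tailSum g) atTop (𝓝 0) :=
  tendsto_sum_nat_add g

lemma tailSum_sub_tailSum {g : ℕ → ℝ} (hg : Summable g) {a b : ℕ} (hab : a ≤ b) :
    tailSum g a - tailSum g b = ∑ i ∈ Finset.Ico a b, g i := by
  have ha := hg.sum_add_tsum_nat_add a
  have hb := hg.sum_add_tsum_nat_add b
  rw [Finset.sum_Ico_eq_sub _ hab, tailSum, tailSum]
  linarith

lemma sub_le_two_mul_sqrt_mul_sub_sqrt {x y : ℝ} (hx : 0 ≤ x) (hy : 0 ≤ y) :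
    x - y ≤ 2 * √x * (√x - √y) := by
  nlinarith [Real.sq_sqrt hx, Real.sq_sqrt hy, sq_nonneg (√x - √y)]

lemma ceil_sub_mul_le_tailSum_sub {f : ℝ → ℝ} (hf : AntitoneOn f (Set.Ioi 0))
    (hsum : Summable fun k : ℕ => f k) {a : ℕ} (ha : 1 ≤ a) {r : ℝ} (har : a ≤ ⌈r⌉₊) :
    ((⌈r⌉₊ : ℝ) - a) * f r ≤
      tailSum (fun k : ℕ => f k) a - tailSum (fun k : ℕ => f k) ⌈r⌉₊ := by
  rw [tailSum_sub_tailSum hsum har, ← Nat.cast_sub har, ← Nat.card_Ico, ← nsmul_eq_mul]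
  refine Finset.card_nsmul_le_sum _ _ _ fun i hi => ?_
  obtain ⟨hai, hir⟩ := Finset.mem_Ico.1 hi
  have hi0 : (0 : ℝ) < i := by exact_mod_cast ha.trans hai
  have hir' : (i : ℝ) < r := Nat.lt_ceil.1 hir
  exact hf hi0 (hi0.trans hir') hir'.le

noncomputable def floydWitness (f : ℝ → ℝ) (τ r : ℝ) : ℝ :=
  2 * √(tailSum (fun k : ℕ => f k) ⌈r / τ⌉₊)

section

variable {f : ℝ → ℝ} {τ : ℝ}

lemma floydWitness_pos (hpos : ∀ x, 0 < x → 0 < f x) (hsum : Summable fun k : ℕ => f k)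
    (hτ : 0 < τ) {r : ℝ} (hr : 0 < r) : 0 < floydWitness f τ r := by
  have ha : 1 ≤ ⌈r / τ⌉₊ := Nat.one_le_ceil_iff.2 (div_pos hr hτ)
  have hS := tailSum_pos hsum fun k hk => hpos k (by exact_mod_cast ha.trans hk)
  unfold floydWitness
  positivity

lemma tendsto_floydWitness (hpos : ∀ x, 0 < x → 0 < f x) (hsum : Summable fun k : ℕ => f k)
    (hτ : 0 < τ) : Tendsto (floydWitness f τ) atTop (𝓝[>] 0) := by
  refine tendsto_nhdsWithin_iff.2 ⟨?_, ?_⟩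
  · have hceil : Tendsto (fun r : ℝ => ⌈r / τ⌉₊) atTop atTop :=
      tendsto_nat_ceil_atTop.comp (tendsto_id.atTop_div_const hτ)
    have hS := (((tendsto_tailSum fun k : ℕ => f k).comp hceil).sqrt).const_mul 2
    rw [Real.sqrt_zero, mul_zero] at hS
    exact hS
  · filter_upwards [eventually_gt_atTop 0] with r hr
    exact floydWitness_pos hpos hsum hτ hr

lemma le_floydWitness_sub_div (hpos : ∀ x, 0 < x → 0 < f x) (hf : AntitoneOn f (Set.Ioi 0))
    (hsum : Summable fun k : ℕ => f k) (hτ : 1 < τ) {r : ℝ} (hr : τ ≤ r) :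
    2 * (1 - τ⁻¹ - r⁻¹) * (floydWitness f τ r)⁻¹ ≤
      (floydWitness f τ r - floydWitness f τ (τ * r)) / (r * f r) := by
  have hτ0 : 0 < τ := one_pos.trans hτ
  have hr0 : 0 < r := hτ0.trans_le hr
  have hfr : 0 < f r := hpos r hr0
  set S := tailSum fun k : ℕ => f k
  set a := ⌈r / τ⌉₊
  set b := ⌈r⌉₊
  have ha : 1 ≤ a := Nat.one_le_ceil_iff.2 (div_pos hr0 hτ0)
  have hab : a ≤ b := Nat.ceil_mono (div_le_self hr0.le hτ.le)
  have hSa : 0 < S a := tailSum_pos hsum fun k hk => hpos k (by exact_mod_cast ha.trans hk)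
  have hSb : 0 < S b :=
    tailSum_pos hsum fun k hk => hpos k (by exact_mod_cast (ha.trans hab).trans hk)
  have hcount : r - r / τ - 1 ≤ (b : ℝ) - a := by
    linarith [Nat.le_ceil r, Nat.ceil_lt_add_one (div_pos hr0 hτ0).le]
  have hsqrt : 0 < √(S a) := Real.sqrt_pos.2 hSa
  have he : floydWitness f τ r - floydWitness f τ (τ * r) = 2 * (√(S a) - √(S b)) := by
    rw [floydWitness, floydWitness, mul_div_cancel_left₀ r hτ0.ne', mul_sub]
  rw [he, floydWitness]
  calc 2 * (1 - τ⁻¹ - r⁻¹) * (2 * √(S a))⁻¹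
      = (r - r / τ - 1) * f r / (√(S a) * (r * f r)) := by field_simp
    _ ≤ ((b : ℝ) - a) * f r / (√(S a) * (r * f r)) := by gcongr
    _ ≤ (S a - S b) / (√(S a) * (r * f r)) := by
        gcongr; exact ceil_sub_mul_le_tailSum_sub hf hsum ha hab
    _ ≤ 2 * √(S a) * (√(S a) - √(S b)) / (√(S a) * (r * f r)) := by
        gcongr; exact sub_le_two_mul_sqrt_mul_sub_sqrt hSa.le hSb.le
    _ = 2 * (√(S a) - √(S b)) / (r * f r) := by field_simp

end

/-- For a nonincreasing positive Floyd function `f` with summable values at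
the nonnegative integers, and fixed `τ > 1`, there is a positive function `e` with
`e r → 0` and `(e r - e (τ r)) / (r * f r) → ∞` as `r → ∞`. -/
theorem stmt0 (f : ℝ → ℝ) (hpos : ∀ x, 0 < x → 0 < f x)
    (hmono : ∀ x y, 0 < x → x ≤ y → f y ≤ f x)
    (hsum : Summable fun k : ℕ => f k) (τ : ℝ) (hτ : 1 < τ) :
    ∃ e : ℝ → ℝ, (∀ r, 0 < r → 0 < e r) ∧
      Tendsto e atTop (𝓝 0) ∧
      Tendsto (fun r => (e r - e (τ * r)) / (r * f r)) atTop atTop := by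
  have hτ0 : 0 < τ := one_pos.trans hτ
  have hf : AntitoneOn f (Set.Ioi 0) := fun x hx y _ hxy => hmono x y hx hxy
  have he := tendsto_floydWitness hpos hsum hτ0
  refine ⟨floydWitness f τ, fun r => floydWitness_pos hpos hsum hτ0,
    tendsto_nhdsWithin_iff.1 he |>.1, ?_⟩
  have hcoeff : Tendsto (fun r : ℝ => 2 * (1 - τ⁻¹ - r⁻¹)) atTop (𝓝 (2 * (1 - τ⁻¹ - 0))) :=
    (tendsto_const_nhds.sub tendsto_inv_atTop_zero).const_mul 2
  have hlim : 0 < 2 * (1 - τ⁻¹ - 0) := by linarith [inv_lt_one_of_one_lt₀ hτ]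
  refine tendsto_atTop_mono' _ ?_ (hcoeff.pos_mul_atTop hlim he.inv_tendsto_nhdsGT_zero)
  filter_upwards [eventually_ge_atTop τ] with r hr
  exact le_floydWitness_sub_div hpos hf hsum hτ hr
end

section
/- Let G be an infinite finitely generated group, μ a probability measure on G whose support generates G as a semigroup, such that the μ-random walk is transient. Then there is no positive μ-harmonic function h on G with h(x) ≤ 𝒢(o,x) for all x ∈ G, where 𝒢 is the Green's function and o the identity. -/
/-!
Work in `ℝ≥0∞` with the `n`-step transition probabilities `p_n(x)` from `1`, the Green function
`G = ∑ p_n` and the probability `F(x)` of ever visiting `x`. The renewal equation gives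
`G(x) = F(x) G(1)`, and stopping at the first visit to `x * y` shows `F(y) u(x * y) ≤ u(x)` for
superharmonic `u`. If `u` is harmonic with `u ≤ G`, then
`u(y) u(1) ≤ F(y) G(1) u(1) ≤ G(1) u(y⁻¹) ≤ F(y⁻¹) G(1)²`, and averaging against `p_n` gives
`u(1)² = ∑_y p_n(y) u(y) u(1) ≤ G(1)² ∑_y p_n(y) F(y⁻¹) ≤ G(1)² ∑_{k ≥ n} p_k(1)`,
a tail of the convergent series `G(1)`. Hence `u(1) = 0`.
-/

open scoped Classical

/-- `n`-fold convolution power of a measure `μ` on a countable group. -/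
noncomputable def convPow {G : Type*} [Group G] (μ : G → ℝ) : ℕ → G → ℝ
  | 0 => fun g => if g = 1 then 1 else 0
  | n + 1 => fun g => ∑' h : G, μ h * convPow μ n (h⁻¹ * g)

/-- Green's function `𝒢(x,y) = ∑_{n ≥ 0} μ^{*n}(x⁻¹ y)`. -/
noncomputable def green {G : Type*} [Group G] (μ : G → ℝ) (x y : G) : ℝ :=
  ∑' n : ℕ, convPow μ n (x⁻¹ * y)

open ENNReal Filter Topology Finset

theorem ENNReal.tsum_mul_tsum_eq_tsum_sum_range (f g : ℕ → ℝ≥0∞) :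
    (∑' n, f n) * ∑' n, g n = ∑' n, ∑ k ∈ range (n + 1), f k * g (n - k) := by
  simp_rw [← Nat.sum_antidiagonal_eq_sum_range_succ fun k l ↦ f k * g l, ← ENNReal.tsum_mul_right,
    ← ENNReal.tsum_mul_left]
  rw [← ENNReal.tsum_prod (f := fun k l => f k * g l),
    ← HasAntidiagonal.sigmaAntidiagonalEquivProd.tsum_eq (fun p : ℕ × ℕ => f p.1 * g p.2),
    ENNReal.tsum_sigma']
  simp_rw [← Finset.tsum_subtype]
  rfl

namespace RandomWalk

variable {G : Type*} [Group G] (ν : G → ℝ≥0∞)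

/- `transProb ν n x` and `firstPassage ν n x` are the probabilities that the walk with step law `ν`
started at `1` is at `x` at time `n`, resp. visits `x` for the first time at time `n`; both
recursions condition on the first step `g`. -/
noncomputable def transProb : ℕ → G → ℝ≥0∞
  | 0 => fun x => if x = 1 then 1 else 0
  | n + 1 => fun x => ∑' g, ν g * transProb n (g⁻¹ * x)

noncomputable def firstPassage : ℕ → G → ℝ≥0∞
  | 0 => fun x => if x = 1 then 1 else 0
  | n + 1 => fun x => if x = 1 then 0 else ∑' g, ν g * firstPassage n (g⁻¹ * x)

noncomputable def greenFun (x : G) : ℝ≥0∞ := ∑' n, transProb ν n x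

noncomputable def hitProb (x : G) : ℝ≥0∞ := ∑' n, firstPassage ν n x

variable {ν}

theorem transProb_zero (x : G) : transProb ν 0 x = if x = 1 then 1 else 0 := rfl

theorem transProb_succ (n : ℕ) (x : G) :
    transProb ν (n + 1) x = ∑' g, ν g * transProb ν n (g⁻¹ * x) := rfl

theorem firstPassage_zero (x : G) : firstPassage ν 0 x = if x = 1 then 1 else 0 := rfl

theorem firstPassage_succ (n : ℕ) (x : G) :
    firstPassage ν (n + 1) x =
      if x = 1 then 0 else ∑' g, ν g * firstPassage ν n (g⁻¹ * x) := rfl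

theorem tsum_transProb_zero_mul (f : G → ℝ≥0∞) : ∑' y, transProb ν 0 y * f y = f 1 := by
  rw [tsum_eq_single 1 fun y hy => by rw [transProb_zero, if_neg hy, zero_mul],
    transProb_zero, if_pos rfl, one_mul]

theorem transProb_add (n m : ℕ) (x : G) :
    transProb ν (n + m) x = ∑' y, transProb ν n y * transProb ν m (y⁻¹ * x) := by
  induction n generalizing x with
  | zero => rw [zero_add, tsum_transProb_zero_mul, inv_one, one_mul]
  | succ n ih =>
    calc transProb ν (n + 1 + m) x
        = ∑' g, ∑' y, ν g * (transProb ν n y * transProb ν m (y⁻¹ * (g⁻¹ * x))) := by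
          rw [add_right_comm, transProb_succ]
          simp only [ih, ENNReal.tsum_mul_left]
      _ = ∑' g, ∑' z, ν g * (transProb ν n (g⁻¹ * z) * transProb ν m (z⁻¹ * x)) := by
          refine tsum_congr fun g => Eq.trans ?_ ((Equiv.mulLeft g).tsum_eq
            fun z => ν g * (transProb ν n (g⁻¹ * z) * transProb ν m (z⁻¹ * x)))
          simp [mul_inv_rev, mul_assoc]
      _ = ∑' z, transProb ν (n + 1) z * transProb ν m (z⁻¹ * x) := by
          rw [ENNReal.tsum_comm]
          simp only [transProb_succ, ← ENNReal.tsum_mul_right, mul_assoc]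

theorem firstPassage_le_transProb (n : ℕ) (x : G) : firstPassage ν n x ≤ transProb ν n x := by
  induction n generalizing x with
  | zero => exact le_rfl
  | succ n ih =>
    rw [firstPassage_succ, transProb_succ]
    split
    · exact zero_le
    · gcongr with g
      exact ih _

theorem sum_range_succ_firstPassage (n : ℕ) (x : G) :
    ∑ k ∈ range (n + 1), firstPassage ν k x =
      if x = 1 then 1 else ∑' g, ν g * ∑ k ∈ range n, firstPassage ν k (g⁻¹ * x) := by
  rw [sum_range_succ', firstPassage_zero]
  split
  · simp [firstPassage_succ, *]
  · simp only [firstPassage_succ, if_neg ‹x ≠ 1›, add_zero, mul_sum]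
    exact (Summable.tsum_finsetSum fun _ _ => ENNReal.summable).symm

theorem transProb_eq_sum_firstPassage (n : ℕ) (x : G) :
    transProb ν n x = ∑ k ∈ range (n + 1), firstPassage ν k x * transProb ν (n - k) 1 := by
  induction n generalizing x with
  | zero => simp [transProb_zero, firstPassage_zero]
  | succ n ih =>
    by_cases hx : x = 1
    · subst hx
      rw [sum_range_succ', sum_eq_zero fun k _ => by rw [firstPassage_succ, if_pos rfl, zero_mul]]
      simp [firstPassage_zero]
    · calc transProb ν (n + 1) x
          = ∑ k ∈ range (n + 1), (∑' g, ν g * firstPassage ν k (g⁻¹ * x)) *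
              transProb ν (n - k) 1 := by
            simp only [transProb_succ, ih, mul_sum, ← ENNReal.tsum_mul_right, mul_assoc]
            exact Summable.tsum_finsetSum fun _ _ => ENNReal.summable
        _ = ∑ k ∈ range (n + 2), firstPassage ν k x * transProb ν (n + 1 - k) 1 := by
            simp [sum_range_succ' _ (n + 1), firstPassage_succ, firstPassage_zero, hx]

theorem greenFun_eq_hitProb_mul (x : G) : greenFun ν x = hitProb ν x * greenFun ν 1 := by
  rw [hitProb, greenFun, greenFun, ENNReal.tsum_mul_tsum_eq_tsum_sum_range]
  exact tsum_congr fun n => transProb_eq_sum_firstPassage n x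

theorem tsum_transProb_mul_hitProb_inv_le (n : ℕ) :
    ∑' y, transProb ν n y * hitProb ν y⁻¹ ≤ ∑' k, transProb ν (k + n) 1 := by
  calc ∑' y, transProb ν n y * hitProb ν y⁻¹
      = ∑' k, ∑' y, transProb ν n y * firstPassage ν k y⁻¹ := by
        simp only [hitProb, ← ENNReal.tsum_mul_left]
        exact ENNReal.tsum_comm
    _ ≤ ∑' k, ∑' y, transProb ν n y * transProb ν k (y⁻¹ * 1) := by
        gcongr with k y
        rw [mul_one]
        exact firstPassage_le_transProb k _
    _ = ∑' k, transProb ν (k + n) 1 := by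
        simp only [← transProb_add, add_comm]

section Harmonic

variable {u : G → ℝ≥0∞}

theorem tsum_mul_transProb_of_harmonic (hu : ∀ x, ∑' g, u (x * g) * ν g = u x)
    (n : ℕ) (x : G) : ∑' y, u (x * y) * transProb ν n y = u x := by
  induction n generalizing x with
  | zero => simp [transProb_zero]
  | succ n ih =>
    calc ∑' y, u (x * y) * transProb ν (n + 1) y
        = ∑' g, (∑' y, u (x * y) * transProb ν n (g⁻¹ * y)) * ν g := by
          simp only [transProb_succ, ← ENNReal.tsum_mul_left, ← ENNReal.tsum_mul_right]
          rw [ENNReal.tsum_comm]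
          exact tsum_congr fun g => tsum_congr fun y => by ring
      _ = ∑' g, u (x * g) * ν g := by
          refine tsum_congr fun g => congrArg (· * ν g) ?_
          rw [← (Equiv.mulLeft g).tsum_eq, ← ih (x * g)]
          simp [mul_assoc]
      _ = u x := hu x

theorem hitProb_mul_le_of_superharmonic (hu : ∀ x, ∑' g, u (x * g) * ν g ≤ u x) (x y : G) :
    hitProb ν y * u (x * y) ≤ u x := by
  suffices ∀ n x y, (∑ k ∈ range n, firstPassage ν k y) * u (x * y) ≤ u x by
    rw [hitProb, ENNReal.tsum_eq_iSup_nat, ENNReal.iSup_mul]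
    exact iSup_le fun n => this n x y
  intro n
  induction n with
  | zero => simp
  | succ n ih =>
    intro x y
    rw [sum_range_succ_firstPassage]
    split
    · simp [*]
    · calc (∑' g, ν g * ∑ k ∈ range n, firstPassage ν k (g⁻¹ * y)) * u (x * y)
          = ∑' g, ((∑ k ∈ range n, firstPassage ν k (g⁻¹ * y)) * u (x * g * (g⁻¹ * y))) * ν g := by
            rw [← ENNReal.tsum_mul_right]
            exact tsum_congr fun g => by simp only [mul_assoc, mul_inv_cancel_left]; ring
        _ ≤ ∑' g, u (x * g) * ν g := by gcongr with g; exact ih _ _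
        _ ≤ u x := hu x

theorem eq_zero_of_harmonic_le_greenFun (hu : ∀ x, ∑' g, u (x * g) * ν g = u x)
    (hle : ∀ x, u x ≤ greenFun ν x) (hfin : greenFun ν 1 ≠ ∞) : u 1 = 0 := by
  set C := greenFun ν 1 * greenFun ν 1
  have key (y : G) : u y * u 1 ≤ hitProb ν y⁻¹ * C := by
    have hit := hitProb_mul_le_of_superharmonic (fun x => (hu x).le) y⁻¹ y
    rw [inv_mul_cancel] at hit
    calc u y * u 1 ≤ hitProb ν y * u 1 * greenFun ν 1 := by
          grw [hle y, greenFun_eq_hitProb_mul, mul_right_comm]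
      _ ≤ u y⁻¹ * greenFun ν 1 := by gcongr
      _ ≤ hitProb ν y⁻¹ * C := by grw [hle, greenFun_eq_hitProb_mul, mul_assoc]
  have bound (n : ℕ) : u 1 * u 1 ≤ (∑' k, transProb ν (k + n) 1) * C :=
    calc u 1 * u 1 = ∑' y, transProb ν n y * (u y * u 1) := by
          rw [← tsum_mul_transProb_of_harmonic hu n 1, ← ENNReal.tsum_mul_right]
          exact tsum_congr fun y => by rw [one_mul]; ring
      _ ≤ ∑' y, transProb ν n y * (hitProb ν y⁻¹ * C) :=
          ENNReal.tsum_le_tsum fun y => by gcongr transProb ν n y * ?_; exact key y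
      _ ≤ (∑' k, transProb ν (k + n) 1) * C := by
          simp only [← mul_assoc, ENNReal.tsum_mul_right]
          gcongr
          exact tsum_transProb_mul_hitProb_inv_le n
  have tail : Tendsto (fun n => (∑' k, transProb ν (k + n) 1) * C) atTop (𝓝 0) := by
    simpa using ENNReal.Tendsto.mul_const (ENNReal.tendsto_sum_nat_add _ hfin)
      (Or.inr (mul_ne_top hfin hfin))
  simpa using ge_of_tendsto' tail bound

end Harmonic

end RandomWalk

section ConvPow

variable {G : Type*} [Group G] {μ : G → ℝ}

theorem convPow_nonneg (hμ0 : ∀ g, 0 ≤ μ g) (n : ℕ) (x : G) : 0 ≤ convPow μ n x := by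
  induction n generalizing x with
  | zero => unfold convPow; positivity
  | succ n ih => exact tsum_nonneg fun g => mul_nonneg (hμ0 g) (ih _)

theorem convPow_le_one (hμ0 : ∀ g, 0 ≤ μ g) (hμ1 : HasSum μ 1) (n : ℕ) (x : G) :
    convPow μ n x ≤ 1 := by
  induction n generalizing x with
  | zero => unfold convPow; split <;> norm_num
  | succ n ih =>
    have hle (g : G) : μ g * convPow μ n (g⁻¹ * x) ≤ μ g := mul_le_of_le_one_right (hμ0 g) (ih _)
    calc convPow μ (n + 1) x = ∑' g, μ g * convPow μ n (g⁻¹ * x) := rfl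
      _ ≤ ∑' g, μ g := (hμ1.summable.of_nonneg_of_le
            (fun g => mul_nonneg (hμ0 g) (convPow_nonneg hμ0 n _)) hle).tsum_le_tsum hle
            hμ1.summable
      _ = 1 := hμ1.tsum_eq

theorem ofReal_convPow (hμ0 : ∀ g, 0 ≤ μ g) (hμ1 : HasSum μ 1) (n : ℕ) (x : G) :
    ENNReal.ofReal (convPow μ n x) =
      RandomWalk.transProb (fun g => ENNReal.ofReal (μ g)) n x := by
  induction n generalizing x with
  | zero => simp [convPow, RandomWalk.transProb_zero, apply_ite ENNReal.ofReal]
  | succ n ih =>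
    have hnonneg (g : G) : 0 ≤ μ g * convPow μ n (g⁻¹ * x) :=
      mul_nonneg (hμ0 g) (convPow_nonneg hμ0 n _)
    have hsum : Summable fun g => μ g * convPow μ n (g⁻¹ * x) :=
      hμ1.summable.of_nonneg_of_le hnonneg
        fun g => mul_le_of_le_one_right (hμ0 g) (convPow_le_one hμ0 hμ1 n _)
    rw [convPow, ENNReal.ofReal_tsum_of_nonneg hnonneg hsum, RandomWalk.transProb_succ]
    simp only [ENNReal.ofReal_mul (hμ0 _), ih]

theorem ofReal_green (hμ0 : ∀ g, 0 ≤ μ g) (hμ1 : HasSum μ 1) {x y : G}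
    (htransient : Summable fun n : ℕ => convPow μ n (x⁻¹ * y)) :
    ENNReal.ofReal (green μ x y) =
      RandomWalk.greenFun (fun g => ENNReal.ofReal (μ g)) (x⁻¹ * y) := by
  rw [green, ENNReal.ofReal_tsum_of_nonneg (fun n => convPow_nonneg hμ0 n _) htransient]
  simp only [ofReal_convPow hμ0 hμ1, RandomWalk.greenFun]

end ConvPow

open RandomWalk in
theorem stmt4_general {G : Type*} [Group G]
    (μ : G → ℝ) (hμ0 : ∀ g, 0 ≤ μ g) (hμ1 : HasSum μ 1)
    (htransient : ∀ x y : G, Summable fun n : ℕ => convPow μ n (x⁻¹ * y)) :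
    ¬ ∃ h : G → ℝ, (∀ x, 0 < h x) ∧
      (∀ x : G, Summable fun g => h (x * g) * μ g) ∧
      (∀ x : G, (∑' g, h (x * g) * μ g) = h x) ∧
      (∀ x : G, h x ≤ green μ 1 x) := by
  rintro ⟨h, hpos, hsum, hharm, hdom⟩
  have harmonic (x : G) : ∑' g, ENNReal.ofReal (h (x * g)) * ENNReal.ofReal (μ g) =
      ENNReal.ofReal (h x) := by
    rw [← hharm x, ENNReal.ofReal_tsum_of_nonneg (fun g => mul_nonneg (hpos _).le (hμ0 g)) (hsum x)]
    simp only [ENNReal.ofReal_mul (hpos _).le]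
  have dominated (x : G) :
      ENNReal.ofReal (h x) ≤ greenFun (fun g => ENNReal.ofReal (μ g)) x := by
    simpa [ofReal_green hμ0 hμ1 (htransient 1 x)] using ENNReal.ofReal_le_ofReal (hdom x)
  have finite : greenFun (fun g => ENNReal.ofReal (μ g)) 1 ≠ ∞ := by
    simpa [ofReal_green hμ0 hμ1 (htransient 1 1)] using ENNReal.ofReal_ne_top (r := green μ 1 1)
  exact (ENNReal.ofReal_pos.2 (hpos 1)).ne'
    (eq_zero_of_harmonic_le_greenFun harmonic dominated finite)

/-- for a transient random walk on an infinite finitely generated group,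
there is no positive μ-harmonic function dominated by `𝒢(o, ·)`. -/
theorem stmt4 {G : Type*} [Group G] [Countable G] [Infinite G] (hFG : Group.FG G)
    (μ : G → ℝ) (hμ0 : ∀ g, 0 ≤ μ g) (hμ1 : HasSum μ 1)
    (hgen : Subsemigroup.closure {g : G | 0 < μ g} = ⊤)
    (htransient : ∀ x y : G, Summable fun n : ℕ => convPow μ n (x⁻¹ * y)) :
    ¬ ∃ h : G → ℝ, (∀ x, 0 < h x) ∧
      (∀ x : G, Summable fun g => h (x * g) * μ g) ∧
      (∀ x : G, (∑' g, h (x * g) * μ g) = h x) ∧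
      (∀ x : G, h x ≤ green μ 1 x) :=
  stmt4_general μ hμ0 hμ1 htransient
end

section
/- Let G act continuously on a compact Hausdorff space X, let μ be a probability measure on G whose support generates G as a semigroup, and let ν be a μ-stationary Borel probability measure on X. If every G-orbit in X is infinite, then ν has no atoms. -/
/-!
Proof idea: the atoms of a finite measure above any positive level are finitely many, so if
`ν` has an atom then some atom `y` has maximal mass `M`. By stationarity `ν {y}` is the
`μ`-average of the masses `ν {g⁻¹ • y}`, all at most `M`, so each of them with `μ g ≠ 0`
equals `M`. Since the support of `μ` generates `G` as a semigroup, the whole orbit of `y`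
consists of atoms of mass `M`, which is impossible for an infinite orbit.
-/

open MeasureTheory

theorem ENNReal.eq_of_tsum_mul_eq_of_le {ι : Type*} {w f : ι → ENNReal} {M : ENNReal}
    (hw : ∑' i, w i = 1) (hM : M ≠ ⊤) (hf : ∀ i, f i ≤ M) (hsum : ∑' i, w i * f i = M)
    {i : ι} (hi : w i ≠ 0) : f i = M := by
  by_contra hne
  have hwi : w i ≠ ⊤ := (ENNReal.lt_top_of_tsum_ne_top (hw ▸ ENNReal.one_ne_top) i).ne
  have hlt : ∑' j, w j * f j < ∑' j, w j * M :=
    ENNReal.tsum_lt_tsum (hsum ▸ hM) (fun j => mul_le_mul_right (hf j) _)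
      (ENNReal.mul_lt_mul_right hi hwi (lt_of_le_of_ne (hf i) hne))
  rw [ENNReal.tsum_mul_right, hw, one_mul, hsum] at hlt
  exact lt_irrefl M hlt

theorem MeasureTheory.Measure.finite_setOf_le_measure_singleton {X : Type*}
    [MeasurableSpace X] [MeasurableSingletonClass X] (ν : Measure X) [IsFiniteMeasure ν]
    {c : ENNReal} (hc : c ≠ 0) : {y : X | c ≤ ν {y}}.Finite :=
  ν.finite_const_le_meas_of_disjoint_iUnion (pos_iff_ne_zero.mpr hc)
    (fun y => measurableSet_singleton y)
    (fun _ _ hab => Set.disjoint_singleton.mpr hab) (measure_ne_top ν _)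

theorem MeasureTheory.Measure.exists_measure_singleton_isMax {X : Type*}
    [MeasurableSpace X] [MeasurableSingletonClass X] (ν : Measure X) [IsFiniteMeasure ν]
    {x : X} (hx : ν {x} ≠ 0) : ∃ y, ∀ z, ν {z} ≤ ν {y} := by
  obtain ⟨y, hy, hmax⟩ := Set.exists_max_image _ (fun y => ν {y})
    (ν.finite_setOf_le_measure_singleton hx) ⟨x, le_refl (ν {x})⟩
  refine ⟨y, fun z => ?_⟩
  by_cases hz : ν {x} ≤ ν {z}
  · exact hmax z hz
  · exact (not_le.mp hz).le.trans hy

section Stationary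

variable {G X : Type*} [Group G] [MulAction G X] [MeasurableSpace X] [MeasurableSingletonClass X]
  {μ : G → ENNReal} {ν : Measure X} [IsFiniteMeasure ν] {M : ENNReal}

theorem measure_singleton_inv_smul_eq_of_stationary (hμ1 : ∑' g, μ g = 1)
    (hstat : ∀ A : Set X, MeasurableSet A →
      ν A = ∑' g : G, μ g * ν ((fun x : X => g • x) ⁻¹' A))
    (hM : ∀ z, ν {z} ≤ M) {y : X} (hy : ν {y} = M) {g : G} (hg : μ g ≠ 0) :
    ν {g⁻¹ • y} = M := by
  refine ENNReal.eq_of_tsum_mul_eq_of_le (f := fun h => ν {h⁻¹ • y}) hμ1 (hy ▸ measure_ne_top ν _) (fun _ => hM _) ?_ hg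
  rw [← hy, hstat {y} (measurableSet_singleton y)]
  simp only [Set.preimage_smul, Set.smul_set_singleton]

theorem measure_singleton_smul_eq_of_stationary (hμ1 : ∑' g, μ g = 1)
    (hgen : Subsemigroup.closure {g : G | μ g ≠ 0} = ⊤)
    (hstat : ∀ A : Set X, MeasurableSet A →
      ν A = ∑' g : G, μ g * ν ((fun x : X => g • x) ⁻¹' A))
    (hM : ∀ z, ν {z} ≤ M) {y : X} (hy : ν {y} = M) (g : G) : ν {g • y} = M := by
  have hlevel_invariant : ∀ h ∈ Subsemigroup.closure {g : G | μ g ≠ 0}, ∀ y, ν {y} = M → ν {h⁻¹ • y} = M := by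
    intro h hh
    induction hh using Subsemigroup.closure_induction with
    | mem a ha => exact fun y hy => measure_singleton_inv_smul_eq_of_stationary hμ1 hstat hM hy ha
    | mul a b _ _ ha hb =>
      intro y hy
      rw [mul_inv_rev, mul_smul]
      exact hb _ (ha y hy)
  simpa using hlevel_invariant g⁻¹ (hgen ▸ trivial) y hy

end Stationary

theorem stmt7_general {G X : Type*} [Group G]
    [TopologicalSpace X] [T2Space X]
    [MeasurableSpace X] [BorelSpace X]
    [MulAction G X]
    (μ : G → ENNReal) (hμ1 : (∑' g, μ g) = 1)
    (hgen : Subsemigroup.closure {g : G | μ g ≠ 0} = ⊤)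
    (ν : Measure X) [IsProbabilityMeasure ν]
    (hstat : ∀ A : Set X, MeasurableSet A →
      ν A = ∑' g : G, μ g * ν ((fun x : X => g • x) ⁻¹' A))
    (horb : ∀ x : X, (MulAction.orbit G x).Infinite) :
    ∀ x : X, ν {x} = 0 := by
  intro x
  by_contra hx
  obtain ⟨y, hmax⟩ := ν.exists_measure_singleton_isMax hx
  have hy : ν {y} ≠ 0 := ne_bot_of_le_ne_bot hx (hmax x)
  refine horb y ((ν.finite_setOf_le_measure_singleton hy).subset ?_)
  rintro _ ⟨g, rfl⟩
  exact (measure_singleton_smul_eq_of_stationary hμ1 hgen hstat hmax rfl g).ge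

/-- a μ-stationary probability measure for a continuous action on a
compact Hausdorff space with all orbits infinite has no atoms. -/
theorem stmt7 {G X : Type*} [Group G] [Countable G]
    [TopologicalSpace X] [CompactSpace X] [T2Space X]
    [MeasurableSpace X] [BorelSpace X]
    [MulAction G X] (hcont : ∀ g : G, Continuous fun x : X => g • x)
    (μ : G → ENNReal) (hμ1 : (∑' g, μ g) = 1)
    (hgen : Subsemigroup.closure {g : G | μ g ≠ 0} = ⊤)
    (ν : Measure X) [IsProbabilityMeasure ν]
    (hstat : ∀ A : Set X, MeasurableSet A →
      ν A = ∑' g : G, μ g * ν ((fun x : X => g • x) ⁻¹' A))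
    (horb : ∀ x : X, (MulAction.orbit G x).Infinite) :
    ∀ x : X, ν {x} = 0 :=
  stmt7_general μ hμ1 hgen ν hstat horb
end

section
/- Let G act by homeomorphisms on a compact Hausdorff space X, μ a probability measure on G whose support generates G as a semigroup, and ν a μ-stationary Borel probability measure. Then G preserves the measure class of ν: for every g ∈ G and Borel A ⊆ X, ν(A) = 0 implies ν(g^{−1}A) = 0. -/
open MeasureTheory

/-- a μ-stationary probability measure has `G`-invariant measure class:
`ν(A) = 0` implies `ν(g⁻¹A) = 0` for every `g`. -/
theorem stmt8 {G X : Type*} [Group G] [Countable G]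
    [TopologicalSpace X] [CompactSpace X] [T2Space X]
    [MeasurableSpace X] [BorelSpace X]
    [MulAction G X] (hcont : ∀ g : G, Continuous fun x : X => g • x)
    (μ : G → ENNReal) (hμ1 : (∑' g, μ g) = 1)
    (hgen : Subsemigroup.closure {g : G | μ g ≠ 0} = ⊤)
    (ν : Measure X) [IsProbabilityMeasure ν]
    (hstat : ∀ A : Set X, MeasurableSet A →
      ν A = ∑' g : G, μ g * ν ((fun x : X => g • x) ⁻¹' A)) :
    ∀ (g : G) (A : Set X), MeasurableSet A → ν A = 0 →
      ν ((fun x : X => g • x) ⁻¹' A) = 0 := by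
  intro g
  have hg : g ∈ Subsemigroup.closure {g : G | μ g ≠ 0} := by
    rw [hgen]; trivial
  induction hg using Subsemigroup.closure_induction with
  | mem h hh =>
    intro A hA hA0
    have h0 := hstat A hA
    rw [hA0] at h0
    have := (ENNReal.tsum_eq_zero.mp h0.symm) h
    rcases mul_eq_zero.mp this with h1 | h1
    · exact absurd h1 hh
    · exact h1
  | mul a b _ _ iha ihb =>
    intro A hA hA0
    have hmeas : MeasurableSet ((fun x : X => a • x) ⁻¹' A) :=
      hA.preimage (hcont a).measurable
    have h1 : ν ((fun x : X => a • x) ⁻¹' A) = 0 := iha A hA hA0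
    have h2 := ihb _ hmeas h1
    have : (fun x : X => (a * b) • x) ⁻¹' A
        = (fun x : X => b • x) ⁻¹' ((fun x : X => a • x) ⁻¹' A) := by
      ext x; simp [mul_smul]
    rw [this]
    exact h2
end

section
/- Let G ↷ B be a minimal convergence action on a compact Hausdorff space, let a, b, c ∈ B with a ≠ b, and let g_n ∈ G be a sequence with g_n a → c and g_n b → c. Then for any atomless Borel probability measure κ on B, the pushforwards g_n κ converge weakly to the Dirac measure δ_c. -/
/-! Since `a ≠ b` have the same limit under `g_n`, the sequence `g_n` leaves every finite set,
so every subsequence has a further subsequence with source/sink pair `(p, c')`. One of `a, b`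
differs from `p`, which forces `c' = c`; hence `g_n x → c` off the single point `p`, a
`κ`-null set, and dominated convergence gives `∫ f ∘ g_n dκ → f c`. -/

open MeasureTheory Filter Topology

/-- A convergence action: for every sequence in `G` leaving every finite set, there are a
subsequence and points `p, c` such that `g_{φ n} • x → c` for every `x ≠ p`. -/
def ConvergenceAction (G X : Type*) [Group G] [TopologicalSpace X] [MulAction G X] : Prop :=
  ∀ g : ℕ → G, (∀ F : Finset G, ∀ᶠ n in atTop, g n ∉ F) →
    ∃ (φ : ℕ → ℕ) (p c : X), StrictMono φ ∧
      ∀ x : X, x ≠ p → Tendsto (fun n => g (φ n) • x) atTop (𝓝 c)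

theorem tendsto_cofinite_of_tendsto_smul_of_ne {G X : Type*} [Group G] [TopologicalSpace X]
    [T2Space X] [MulAction G X] {g : ℕ → G} {a b c : X} (hab : a ≠ b)
    (ha : Tendsto (fun n => g n • a) atTop (𝓝 c))
    (hb : Tendsto (fun n => g n • b) atTop (𝓝 c)) :
    Tendsto g atTop cofinite := by
  refine le_cofinite_iff_eventually_ne.2 fun h => ?_
  by_contra hfreq
  obtain ⟨φ, hφ, hgφ⟩ := extraction_of_frequently_atTop (not_eventually.1 hfreq |>.mono
    fun _ => not_not.1)
  have limit_of_tendsto {x : X} (hx : Tendsto (fun n => g n • x) atTop (𝓝 c)) : h • x = c := by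
    have hxφ := hx.comp hφ.tendsto_atTop
    simp only [Function.comp_def, hgφ] at hxφ
    exact tendsto_nhds_unique tendsto_const_nhds hxφ
  exact hab (MulAction.injective h ((limit_of_tendsto ha).trans (limit_of_tendsto hb).symm))

theorem ConvergenceAction.exists_subseq_tendsto_smul {G X : Type*} [Group G]
    [TopologicalSpace X] [T2Space X] [MulAction G X] (hconv : ConvergenceAction G X)
    {g : ℕ → G} {a b c : X} (hab : a ≠ b)
    (ha : Tendsto (fun n => g n • a) atTop (𝓝 c))
    (hb : Tendsto (fun n => g n • b) atTop (𝓝 c)) :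
    ∃ (φ : ℕ → ℕ) (p : X), StrictMono φ ∧
      ∀ x : X, x ≠ p → Tendsto (fun n => g (φ n) • x) atTop (𝓝 c) := by
  have hg := tendsto_cofinite_of_tendsto_smul_of_ne hab ha hb
  obtain ⟨φ, p, c', hφ, hlim⟩ :=
    hconv g fun F => hg.eventually F.finite_toSet.compl_mem_cofinite
  have hc' : c' = c := by
    obtain ⟨d, hdp, hd⟩ : ∃ d, d ≠ p ∧ Tendsto (fun n => g n • d) atTop (𝓝 c) :=
      (hab.ne_or_ne p).elim (fun hap => ⟨a, hap, ha⟩) fun hbp => ⟨b, hbp, hb⟩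
    exact tendsto_nhds_unique (hlim d hdp) (hd.comp hφ.tendsto_atTop)
  exact ⟨φ, p, hφ, hc' ▸ hlim⟩

theorem tendsto_integral_comp_of_ae_tendsto {X Y : Type*} [TopologicalSpace X] [CompactSpace X]
    [MeasurableSpace X] [OpensMeasurableSpace X] [MeasurableSpace Y] {κ : Measure Y}
    [IsProbabilityMeasure κ] {u : ℕ → Y → X} (hu : ∀ n, Measurable (u n)) {c : X}
    (hlim : ∀ᵐ x ∂κ, Tendsto (fun n => u n x) atTop (𝓝 c)) (f : C(X, ℝ)) :
    Tendsto (fun n => ∫ x, f (u n x) ∂κ) atTop (𝓝 (f c)) := by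
  rw [show f c = ∫ _, f c ∂κ by simp]
  refine tendsto_integral_of_dominated_convergence (fun _ => ‖f‖)
    (fun n => (f.continuous.measurable.comp (hu n)).aestronglyMeasurable) (integrable_const _)
    (fun n => .of_forall fun x => f.norm_coe_le_norm _) ?_
  filter_upwards [hlim] with x hx
  exact (f.continuous.tendsto c).comp hx

theorem stmt11_general {G B : Type*} [Group G]
    [TopologicalSpace B] [CompactSpace B] [T2Space B]
    [MeasurableSpace B] [BorelSpace B]
    [MulAction G B] (hcont : ∀ g : G, Continuous fun x : B => g • x)
    (hconv : ConvergenceAction G B)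
    (a b c : B) (hab : a ≠ b) (g : ℕ → G)
    (ha : Tendsto (fun n => g n • a) atTop (𝓝 c))
    (hb : Tendsto (fun n => g n • b) atTop (𝓝 c))
    (κ : Measure B) [IsProbabilityMeasure κ] [NullSingletonClass κ] :
    ∀ f : C(B, ℝ), Tendsto (fun n => ∫ x, f (g n • x) ∂κ) atTop (𝓝 (f c)) := by
  intro f
  refine tendsto_of_subseq_tendsto fun ns hns => ?_
  obtain ⟨φ, p, -, hlim⟩ := hconv.exists_subseq_tendsto_smul hab
    (ha.comp hns) (hb.comp hns)
  refine ⟨φ, tendsto_integral_comp_of_ae_tendsto (fun n => (hcont _).measurable) ?_ f⟩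
  filter_upwards [κ.ae_ne p] with x hx
  exact hlim x hx

/-- for a minimal convergence action, if `g_n a → c` and `g_n b → c` with
`a ≠ b`, then `g_n κ → δ_c` weakly for every atomless Borel probability measure `κ`. -/
theorem stmt11 {G B : Type*} [Group G] [Countable G]
    [TopologicalSpace B] [CompactSpace B] [T2Space B]
    [MeasurableSpace B] [BorelSpace B]
    [MulAction G B] (hcont : ∀ g : G, Continuous fun x : B => g • x)
    (hconv : ConvergenceAction G B)
    (hmin : ∀ x : B, Dense (MulAction.orbit G x))
    (a b c : B) (hab : a ≠ b) (g : ℕ → G)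
    (ha : Tendsto (fun n => g n • a) atTop (𝓝 c))
    (hb : Tendsto (fun n => g n • b) atTop (𝓝 c))
    (κ : Measure B) [IsProbabilityMeasure κ] [NullSingletonClass κ] :
    ∀ f : C(B, ℝ), Tendsto (fun n => ∫ x, f (g n • x) ∂κ) atTop (𝓝 (f c)) :=
  stmt11_general hcont hconv a b c hab g ha hb κ
end
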